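/- Let v, v_* ∈ ℝ³ and let σ ∈ 𝕊² be a unit vector with (v − v_*)·σ ≥ 0. Then for all κ, ι ∈ [0,1], (1 − √2/2)(‖v‖² + ‖v_*‖²) ≤ ‖v(κ)‖² + ‖v_*(ι)‖² ≤ (1 + √2/2)(‖v‖² + ‖v_*‖²). -/

import Mathlib

open MeasureTheory
open scoped ENNReal RealInnerProductSpace

noncomputable section

/-- The velocity space `ℝ³`. -/
abbrev R3 : Type := EuclideanSpace ℝ (Fin 3)

private theorem key_upper (c r s W U κ ι : ℝ) (hc2 : c^2 = 2) (hc1 : 1 ≤ c)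
    (hr : 0 ≤ r) (hrU : 2*r ≤ U) (hs : s^2 ≤ W*r) (hW : 0 ≤ W)
    (hκ0 : 0 ≤ κ) (hκ1 : κ ≤ 1) (hι0 : 0 ≤ ι) (hι1 : ι ≤ 1) :
    (κ-ι)*s + (κ^2-κ)*r + (ι^2-ι)*r ≤ c/4*(W+U) := by
  have hU : 0 ≤ U := by linarith
  have hX : 0 ≤ c/4*(W+U) := by positivity
  have hcc : (c/4*(W+U))^2 = (W+U)^2/8 := by
    rw [mul_pow, div_pow, hc2]; ring
  have habs : s^2 ≤ (c/4*(W+U))^2 := by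
    rw [hcc]
    nlinarith [sq_nonneg (W-U), mul_nonneg hW (by linarith : (0:ℝ) ≤ U - 2*r)]
  have h1 : -(c/4*(W+U)) ≤ s ∧ s ≤ c/4*(W+U) := by
    constructor <;> nlinarith [hX, habs]
  rcases le_or_gt 0 s with h | h
  · nlinarith [mul_nonneg (mul_nonneg hκ0 (sub_nonneg.2 hκ1)) hr,
      mul_nonneg (mul_nonneg hι0 (sub_nonneg.2 hι1)) hr,
      mul_nonneg (by linarith : (0:ℝ) ≤ 1 - (κ - ι)) h, h1.2]
  · nlinarith [mul_nonneg (mul_nonneg hκ0 (sub_nonneg.2 hκ1)) hr,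
      mul_nonneg (mul_nonneg hι0 (sub_nonneg.2 hι1)) hr,
      mul_nonneg (by linarith : (0:ℝ) ≤ κ - ι + 1) (by linarith : (0:ℝ) ≤ -s), h1.1]

private theorem key_lower_aux (c r s W U κ ι : ℝ) (hc2 : c^2 = 2) (hc1 : 1 ≤ c)
    (hr : 0 ≤ r) (hrU : 2*r ≤ U) (hs : s^2 ≤ W*r) (hW : 0 ≤ W) (hs0 : 0 ≤ s)
    (hκ0 : 0 ≤ κ) (hκ1 : κ ≤ 1) (hι0 : 0 ≤ ι) (hι1 : ι ≤ 1) :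
    -(c/4*(W+U)) ≤ (κ-ι)*s + (κ^2-κ)*r + (ι^2-ι)*r := by
  have hU : 0 ≤ U := by linarith
  have hc43 : 4 ≤ 3*c := by nlinarith
  rcases le_or_gt r s with h | h
  · have hXs : s ≤ c/4*(W+U) := by
      have hX : 0 ≤ c/4*(W+U) := by positivity
      have hcc : (c/4*(W+U))^2 = (W+U)^2/8 := by rw [mul_pow, div_pow, hc2]; ring
      nlinarith [sq_nonneg (W-U), mul_nonneg hW (by linarith : (0:ℝ) ≤ U - 2*r)]
    nlinarith [mul_nonneg hκ0 (by linarith : (0:ℝ) ≤ s - r), mul_nonneg (mul_nonneg hκ0 hκ0) hr,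
      mul_nonneg (by linarith : (0:ℝ) ≤ 1 - ι) (by nlinarith : (0:ℝ) ≤ s - ι*r)]
  · have hr' : 0 < r := lt_of_le_of_lt hs0 h
    have h4r : -(2*(r^2+s^2)) ≤ 4*r*((κ-ι)*s + (κ^2-κ)*r + (ι^2-ι)*r) := by
      nlinarith [sq_nonneg (2*r*κ + s - r), sq_nonneg (2*r*ι - (s+r))]
    have hgoal4r : 2*(r^2+s^2) ≤ c*r*(W+U) := by
      rcases le_or_gt W r with hWr | hWr
      · nlinarith [mul_nonneg (mul_nonneg hr (by linarith : (0:ℝ) ≤ r - W)) (by linarith : (0:ℝ) ≤ 2*c - 2),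
          mul_nonneg (mul_nonneg (by linarith : (0:ℝ) ≤ c) hr) (by linarith : (0:ℝ) ≤ U - 2*r),
          mul_nonneg (mul_nonneg hW hr) (by linarith : (0:ℝ) ≤ 3*c - 4)]
      · nlinarith [mul_nonneg (mul_nonneg (by linarith : (0:ℝ) ≤ c) hr) (by linarith : (0:ℝ) ≤ W - r),
          mul_nonneg (mul_nonneg (by linarith : (0:ℝ) ≤ c) hr) (by linarith : (0:ℝ) ≤ U - 2*r),
          mul_nonneg (sq_nonneg r) (by linarith : (0:ℝ) ≤ 3*c - 4),
          mul_nonneg (by linarith : (0:ℝ) ≤ r - s) (by linarith : (0:ℝ) ≤ r + s)]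
    nlinarith [h4r, hgoal4r, hr']

private theorem key_lower (c r s W U κ ι : ℝ) (hc2 : c^2 = 2) (hc1 : 1 ≤ c)
    (hr : 0 ≤ r) (hrU : 2*r ≤ U) (hs : s^2 ≤ W*r) (hW : 0 ≤ W)
    (hκ0 : 0 ≤ κ) (hκ1 : κ ≤ 1) (hι0 : 0 ≤ ι) (hι1 : ι ≤ 1) :
    -(c/4*(W+U)) ≤ (κ-ι)*s + (κ^2-κ)*r + (ι^2-ι)*r := by
  rcases le_or_gt 0 s with h | h
  · exact key_lower_aux c r s W U κ ι hc2 hc1 hr hrU hs hW h hκ0 hκ1 hι0 hι1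
  · have := key_lower_aux c r (-s) W U ι κ hc2 hc1 hr hrU (by nlinarith) hW (by linarith)
      hι0 hι1 hκ0 hκ1
    nlinarith [this]

/-- If `(v − v_*)·σ ≥ 0` for the unit vector `σ`, then for all `κ, ι ∈ [0,1]` the interpolated
velocities `v(κ) = κv' + (1 − κ)v` and `v_*(ι) = ιv_*' + (1 − ι)v_*` satisfy
`(1 − √2/2)(‖v‖² + ‖v_*‖²) ≤ ‖v(κ)‖² + ‖v_*(ι)‖² ≤ (1 + √2/2)(‖v‖² + ‖v_*‖²)`. -/
theorem statement2 (v vs σ : R3) (hσ : ‖σ‖ = 1)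
    (hsign : 0 ≤ (inner ℝ (v - vs) σ : ℝ))
    (κ ι : ℝ) (hκ : κ ∈ Set.Icc (0:ℝ) 1) (hι : ι ∈ Set.Icc (0:ℝ) 1) :
    let v' : R3 := (2⁻¹ : ℝ) • (v + vs) + (‖v - vs‖ / 2) • σ
    let vs' : R3 := (2⁻¹ : ℝ) • (v + vs) - (‖v - vs‖ / 2) • σ
    let vκ : R3 := κ • v' + (1 - κ) • v
    let vι : R3 := ι • vs' + (1 - ι) • vs
    (1 - Real.sqrt 2 / 2) * (‖v‖ ^ 2 + ‖vs‖ ^ 2) ≤ ‖vκ‖ ^ 2 + ‖vι‖ ^ 2 ∧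
    ‖vκ‖ ^ 2 + ‖vι‖ ^ 2 ≤ (1 + Real.sqrt 2 / 2) * (‖v‖ ^ 2 + ‖vs‖ ^ 2) := by
  intro v' vs' vκ vι
  set u : R3 := v - vs with hu
  set w : R3 := v + vs with hw
  set d : R3 := (‖u‖ / 2) • σ - (2⁻¹ : ℝ) • u with hd
  have hvκ : vκ = v + κ • d := by
    show κ • ((2⁻¹ : ℝ) • (v + vs) + (‖v - vs‖ / 2) • σ) + (1 - κ) • v = _
    rw [hd, hu]; module
  have hvι : vι = vs - ι • d := by
    show ι • ((2⁻¹ : ℝ) • (v + vs) - (‖v - vs‖ / 2) • σ) + (1 - ι) • vs = _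
    rw [hd, hu]; module
  have hd2 : ‖d‖^2 = (‖u‖^2 - ‖u‖ * ⟪u, σ⟫) / 2 := by
    rw [← real_inner_self_eq_norm_sq, hd]
    simp only [inner_sub_left, inner_sub_right, real_inner_smul_left, real_inner_smul_right,
      real_inner_self_eq_norm_sq, hσ, real_inner_comm σ u, norm_smul, Real.norm_eq_abs,
      mul_pow, sq_abs, mul_one, one_pow]
    ring
  have hud : ⟪u, d⟫ = -‖d‖^2 := by
    rw [hd2, hd]
    simp only [inner_sub_right, real_inner_smul_right, real_inner_self_eq_norm_sq]
    ring
  have hwd : ⟪w, d⟫ ^ 2 ≤ ‖w‖^2 * ‖d‖^2 := by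
    have h := real_inner_mul_inner_self_le w d
    rw [real_inner_self_eq_norm_sq, real_inner_self_eq_norm_sq] at h
    nlinarith [h]
  have hpar : ‖w‖^2 + ‖u‖^2 = 2 * (‖v‖^2 + ‖vs‖^2) := by
    rw [hw, hu, norm_add_sq_real, norm_sub_sq_real]; ring
  have h2r : 2 * ‖d‖^2 ≤ ‖u‖^2 := by
    have : 0 ≤ ‖u‖ * ⟪u, σ⟫ := mul_nonneg (norm_nonneg u) hsign
    rw [hd2]; linarith
  have hnκ : ‖vκ‖^2 = ‖v‖^2 + 2 * (κ * ⟪v, d⟫) + κ^2 * ‖d‖^2 := by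
    rw [hvκ, norm_add_sq_real, real_inner_smul_right, norm_smul]
    simp [mul_pow, sq_abs]
  have hnι : ‖vι‖^2 = ‖vs‖^2 - 2 * (ι * ⟪vs, d⟫) + ι^2 * ‖d‖^2 := by
    rw [hvι, norm_sub_sq_real, real_inner_smul_right, norm_smul]
    simp [mul_pow, sq_abs]
  have hpq : 2 * ⟪v, d⟫ = ⟪w, d⟫ + ⟪u, d⟫ ∧ 2 * ⟪vs, d⟫ = ⟪w, d⟫ - ⟪u, d⟫ := by
    constructor <;> · rw [hw, hu]; simp only [inner_add_left, inner_sub_left]; ring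
  have hS : ‖vκ‖^2 + ‖vι‖^2 = (‖v‖^2 + ‖vs‖^2) +
      ((κ-ι) * ⟪w, d⟫ + (κ^2-κ) * ‖d‖^2 + (ι^2-ι) * ‖d‖^2) := by
    linear_combination hnκ + hnι + κ * hpq.1 - ι * hpq.2 + (κ + ι) * hud
  have hc2 : (Real.sqrt 2)^2 = 2 := Real.sq_sqrt (by norm_num)
  have hc1 : 1 ≤ Real.sqrt 2 := by
    nlinarith [Real.sqrt_nonneg 2, hc2]
  have hE : Real.sqrt 2 / 4 * (‖w‖^2 + ‖u‖^2) = Real.sqrt 2 / 2 * (‖v‖^2 + ‖vs‖^2) := by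
    linear_combination (Real.sqrt 2 / 4) * hpar
  have hup := key_upper (Real.sqrt 2) (‖d‖^2) ⟪w, d⟫ (‖w‖^2) (‖u‖^2) κ ι hc2 hc1
    (sq_nonneg _) h2r hwd (sq_nonneg _) hκ.1 hκ.2 hι.1 hι.2
  have hlo := key_lower (Real.sqrt 2) (‖d‖^2) ⟪w, d⟫ (‖w‖^2) (‖u‖^2) κ ι hc2 hc1
    (sq_nonneg _) h2r hwd (sq_nonneg _) hκ.1 hκ.2 hι.1 hι.2
  constructor <;> [skip; skip] <;> rw [hS] <;> linarith [hup, hlo, hE]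

end
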